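/- Let λ > 0, c > 0, t > 0, and define F(u,t) = ∑_{k=0}^∞ (λ/(2c))^{2k} (c²t² − u²)^k / (k!)². Then ∫₀^{ct} (∂F/∂t)(u,t) du = (c/2)(e^{λt} + e^{−λt}) − c. -/

import Mathlib

/-- `F(u,t) = ∑_{k=0}^∞ (λ/(2c))^{2k} (c²t² − u²)^k / (k!)²`,
which equals `I₀((λ/c)√(c²t² − u²))` for `|u| ≤ ct`. -/
noncomputable def F (lam c u t : ℝ) : ℝ :=
  ∑' k : ℕ, (lam / (2 * c)) ^ (2 * k) * (c ^ 2 * t ^ 2 - u ^ 2) ^ k /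
    ((Nat.factorial k : ℝ)) ^ 2

/-!
With `B(x) = ∑ xᵏ/(k!)²` we have `F(u,t) = B((λ/2c)²(c²t² − u²))`, so termwise differentiation
writes `∂F/∂t` as a series whose terms are nonnegative on `[0, ct]` and may therefore be integrated
one by one. By the Wallis-type formula `∫₀ᵃ (a² − u²)ᵐ du = a²ᵐ⁺¹ 4ᵐ (m!)² / (2m+1)!`, the `k`-th
term integrates to `c (λt)²ᵏ⁺² / (2k+2)!`, and these sum to `c (cosh λt − 1)`.
-/

open Real Nat

/-- `besselSeries x = I₀(2√x)` for `x ≥ 0`. -/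
noncomputable def besselSeries (x : ℝ) : ℝ := ∑' k : ℕ, x ^ k / (k ! : ℝ) ^ 2

lemma norm_pow_div_factorial_mul_le (x : ℝ) (k : ℕ) {m : ℝ} (hm : 1 ≤ m) :
    ‖x ^ k / (k ! * m)‖ ≤ ‖x‖ ^ k / k ! := by
  rw [norm_div, norm_pow, norm_mul, norm_of_nonneg (show (0 : ℝ) ≤ (k ! : ℝ) by positivity),
    norm_of_nonneg (show 0 ≤ m by linarith)]
  gcongr
  exact le_mul_of_one_le_right (by positivity) hm

lemma summable_pow_div_factorial_sq (x : ℝ) : Summable fun k : ℕ => x ^ k / (k ! : ℝ) ^ 2 :=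
  .of_norm_bounded (summable_pow_div_factorial ‖x‖) fun k => by
    simpa only [sq] using norm_pow_div_factorial_mul_le x k (one_le_cast.2 k.factorial_pos)

lemma hasDerivAt_besselSeries (x : ℝ) :
    HasDerivAt besselSeries (∑' k : ℕ, x ^ k / (k ! * (k + 1)! : ℝ)) x := by
  have hshift : besselSeries = fun y => 1 + ∑' k : ℕ, y ^ (k + 1) / ((k + 1)! : ℝ) ^ 2 :=
    funext fun y => by simp [besselSeries, (summable_pow_div_factorial_sq y).tsum_eq_zero_add]
  have hx : x ∈ Set.Ioo (-(|x| + 1)) (|x| + 1) := by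
    constructor <;> linarith [neg_abs_le x, le_abs_self x]
  have hsum : Summable fun k : ℕ => x ^ (k + 1) / ((k + 1)! : ℝ) ^ 2 :=
    (summable_nat_add_iff 1).2 (summable_pow_div_factorial_sq x)
  have hderiv (k : ℕ) (y : ℝ) : HasDerivAt (fun y : ℝ => y ^ (k + 1) / ((k + 1)! : ℝ) ^ 2)
      (y ^ k / (k ! * (k + 1)! : ℝ)) y := by
    refine ((hasDerivAt_pow (k + 1) y).div_const _).congr_deriv ?_
    rw [factorial_succ k]
    push_cast
    field_simp
  have hbound (k : ℕ) (y : ℝ) (hy : y ∈ Set.Ioo (-(|x| + 1)) (|x| + 1)) :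
      ‖y ^ k / (k ! * (k + 1)! : ℝ)‖ ≤ (|x| + 1) ^ k / k ! := by
    refine (norm_pow_div_factorial_mul_le y k (one_le_cast.2 (k + 1).factorial_pos)).trans ?_
    gcongr
    exact (abs_lt.2 hy).le
  rw [hshift]
  exact (hasDerivAt_tsum_of_isPreconnected (summable_pow_div_factorial (|x| + 1)) isOpen_Ioo
    isPreconnected_Ioo (fun k y _ => hderiv k y) hbound hx hsum hx).const_add 1

lemma F_eq_besselSeries (lam c u t : ℝ) :
    F lam c u t = besselSeries ((lam / (2 * c)) ^ 2 * (c ^ 2 * t ^ 2 - u ^ 2)) := by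
  simp only [F, besselSeries, pow_mul, mul_pow]

lemma hasDerivAt_F (lam c u t : ℝ) :
    HasDerivAt (fun s => F lam c u s)
      (∑' k : ℕ, ((lam / (2 * c)) ^ 2 * (c ^ 2 * t ^ 2 - u ^ 2)) ^ k / (k ! * (k + 1)! : ℝ) *
        ((lam / (2 * c)) ^ 2 * (2 * c ^ 2 * t))) t := by
  have hinner : HasDerivAt (fun s => (lam / (2 * c)) ^ 2 * (c ^ 2 * s ^ 2 - u ^ 2))
      ((lam / (2 * c)) ^ 2 * (2 * c ^ 2 * t)) t := by
    refine (((hasDerivAt_pow 2 t).const_mul (c ^ 2)).sub_const (u ^ 2)).const_mul _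
      |>.congr_deriv ?_
    ring
  simp_rw [F_eq_besselSeries, tsum_mul_right]
  exact (hasDerivAt_besselSeries _).comp t hinner

lemma integral_sq_sub_sq_pow_succ (a : ℝ) (m : ℕ) :
    (2 * m + 3) * ∫ u in (0 : ℝ)..a, (a ^ 2 - u ^ 2) ^ (m + 1) =
      (2 * m + 2) * a ^ 2 * ∫ u in (0 : ℝ)..a, (a ^ 2 - u ^ 2) ^ m := by
  have hderiv (u : ℝ) : HasDerivAt (fun u => u * (a ^ 2 - u ^ 2) ^ (m + 1))
      ((2 * m + 3) * (a ^ 2 - u ^ 2) ^ (m + 1) - (2 * m + 2) * a ^ 2 * (a ^ 2 - u ^ 2) ^ m) u := by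
    refine ((hasDerivAt_id u).fun_mul
      (((hasDerivAt_pow 2 u).const_sub (a ^ 2)).fun_pow (m + 1))).congr_deriv ?_
    simp only [id, add_tsub_cancel_right, pow_succ]
    push_cast
    ring
  have hftc := intervalIntegral.integral_eq_sub_of_hasDerivAt (fun u _ => hderiv u)
    ((by fun_prop : Continuous fun u : ℝ => (2 * m + 3) * (a ^ 2 - u ^ 2) ^ (m + 1) -
      (2 * m + 2) * a ^ 2 * (a ^ 2 - u ^ 2) ^ m).intervalIntegrable 0 a)
  rw [intervalIntegral.integral_sub ((by fun_prop : Continuous _).intervalIntegrable _ _)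
    ((by fun_prop : Continuous _).intervalIntegrable _ _), intervalIntegral.integral_const_mul,
    intervalIntegral.integral_const_mul] at hftc
  simp only [sub_self, zero_pow m.succ_ne_zero, mul_zero, zero_mul] at hftc
  linarith

lemma integral_sq_sub_sq_pow (a : ℝ) (m : ℕ) :
    ∫ u in (0 : ℝ)..a, (a ^ 2 - u ^ 2) ^ m =
      a ^ (2 * m + 1) * 4 ^ m * (m ! : ℝ) ^ 2 / (2 * m + 1)! := by
  induction m with
  | zero => simp
  | succ m ih =>
    have h := integral_sq_sub_sq_pow_succ a m
    rw [ih, mul_comm, ← eq_div_iff (by positivity)] at h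
    rw [h, show 2 * (m + 1) + 1 = 2 * m + 1 + 1 + 1 by ring, factorial_succ (2 * m + 1 + 1),
      factorial_succ (2 * m + 1), factorial_succ m]
    push_cast
    field_simp
    ring

lemma hasSum_intervalIntegral_of_nonneg {ι : Type*} [Countable ι] {f : ι → ℝ → ℝ} {a b s : ℝ}
    (hab : a ≤ b) (hf : ∀ i, IntervalIntegrable (f i) MeasureTheory.volume a b)
    (hnonneg : ∀ i, ∀ u ∈ Set.Ioc a b, 0 ≤ f i u) (hs : HasSum (fun i => ∫ u in a..b, f i u) s) :
    ∫ u in a..b, ∑' i, f i u = s := by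
  simp only [intervalIntegral.integral_of_le hab] at hs ⊢
  have hnorm : (fun i => ∫ u in Set.Ioc a b, ‖f i u‖) = fun i => ∫ u in Set.Ioc a b, f i u :=
    funext fun i => MeasureTheory.setIntegral_congr_fun measurableSet_Ioc
      fun u hu => Real.norm_of_nonneg (hnonneg i u hu)
  refine (MeasureTheory.hasSum_integral_of_summable_integral_norm (fun i => (hf i).1) ?_).unique hs
  rw [hnorm]
  exact hs.summable

lemma hasSum_cosh_sub_one (x : ℝ) :
    HasSum (fun k : ℕ => x ^ (2 * k + 2) / (2 * k + 2)!) (cosh x - 1) := by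
  simpa [mul_add] using (hasSum_nat_add_iff' 1).2 (hasSum_cosh x)

lemma integral_deriv_F_summand (lam c t : ℝ) (hc : c ≠ 0) (k : ℕ) :
    ∫ u in (0 : ℝ)..c * t, ((lam / (2 * c)) ^ 2 * (c ^ 2 * t ^ 2 - u ^ 2)) ^ k /
        (k ! * (k + 1)! : ℝ) * ((lam / (2 * c)) ^ 2 * (2 * c ^ 2 * t)) =
      c * (lam * t) ^ (2 * k + 2) / (2 * k + 2)! := by
  have hintegrand (u : ℝ) : ((lam / (2 * c)) ^ 2 * (c ^ 2 * t ^ 2 - u ^ 2)) ^ k /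
      (k ! * (k + 1)! : ℝ) * ((lam / (2 * c)) ^ 2 * (2 * c ^ 2 * t)) =
      ((lam / (2 * c)) ^ (2 * k + 2) * (2 * c ^ 2 * t) / (k ! * (k + 1)! : ℝ)) *
        ((c * t) ^ 2 - u ^ 2) ^ k := by
    rw [mul_pow, ← pow_mul, mul_pow c t]
    ring
  simp_rw [hintegrand, intervalIntegral.integral_const_mul, integral_sq_sub_sq_pow]
  rw [show 2 * k + 2 = 2 * k + 1 + 1 by ring, factorial_succ (2 * k + 1), factorial_succ k,
    div_pow, mul_pow, mul_pow, show (4 : ℝ) ^ k = 2 ^ (2 * k) by rw [pow_mul]; norm_num]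
  push_cast
  field_simp
  ring

theorem integral_dF_dt_general
    (lam c t : ℝ) (hc : 0 < c) (ht : 0 < t) :
    ∫ u in (0 : ℝ)..(c * t), deriv (fun s => F lam c u s) t =
      c / 2 * (Real.exp (lam * t) + Real.exp (-(lam * t))) - c := by
  have hnonneg (k : ℕ) (u : ℝ) (hu : u ∈ Set.Ioc 0 (c * t)) :
      0 ≤ ((lam / (2 * c)) ^ 2 * (c ^ 2 * t ^ 2 - u ^ 2)) ^ k / (k ! * (k + 1)! : ℝ) *
        ((lam / (2 * c)) ^ 2 * (2 * c ^ 2 * t)) := by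
    have hX : 0 ≤ c ^ 2 * t ^ 2 - u ^ 2 := by nlinarith [hu.1, hu.2]
    positivity
  calc ∫ u in (0 : ℝ)..(c * t), deriv (fun s => F lam c u s) t
      = ∫ u in (0 : ℝ)..(c * t), ∑' k : ℕ,
          ((lam / (2 * c)) ^ 2 * (c ^ 2 * t ^ 2 - u ^ 2)) ^ k / (k ! * (k + 1)! : ℝ) *
            ((lam / (2 * c)) ^ 2 * (2 * c ^ 2 * t)) :=
        intervalIntegral.integral_congr fun u _ => (hasDerivAt_F lam c u t).deriv
    _ = c * (cosh (lam * t) - 1) :=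
        hasSum_intervalIntegral_of_nonneg (by positivity)
          (fun k => (by fun_prop : Continuous _).intervalIntegrable _ _) hnonneg
          (by simpa only [integral_deriv_F_summand lam c t hc.ne', mul_div_assoc]
            using (hasSum_cosh_sub_one (lam * t)).mul_left c)
    _ = c / 2 * (Real.exp (lam * t) + Real.exp (-(lam * t))) - c := by
        rw [cosh_eq]
        ring

theorem integral_dF_dt
    (lam c t : ℝ) (hlam : 0 < lam) (hc : 0 < c) (ht : 0 < t) :
    ∫ u in (0 : ℝ)..(c * t), deriv (fun s => F lam c u s) t =
      c / 2 * (Real.exp (lam * t) + Real.exp (-(lam * t))) - c :=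
  integral_dF_dt_general lam c t hc ht
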